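/- Let d ≥ 1 be an integer, M ≥ 0, R > 0, λ⁰ ∈ ℂ^d, and let φ be a holomorphic function on the open polydisk D_d(λ⁰,R) = {λ ∈ ℂ^d : |λ_j − λ⁰_j| < R for all j} with |φ(λ)| ≤ M for all λ ∈ D_d(λ⁰,R). Then there exists a holomorphic function φ̂ on the polydisk D_{2d}(ι(λ⁰), R/4) ⊆ ℂ^{2d} such that |φ̂(w)| ≤ 4^d·M for all w ∈ D_{2d}(ι(λ⁰),R/4), and φ̂(ι(λ)) = Re(φ(λ)) for all λ ∈ D_d(λ⁰, R/4). -/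

import Mathlib

noncomputable section

/-- The open polydisk in `ℂ^k` centered at `z` with radius `r`. -/
def polydisk (k : ℕ) (z : Fin k → ℂ) (r : ℝ) : Set (Fin k → ℂ) :=
  {w | ∀ j, ‖w j - z j‖ < r}

/-- The embedding `ι : ℂ^d → ℂ^{2d}`,
`ι(λ) = (Re λ₁, Im λ₁, Re λ₂, Im λ₂, …, Re λ_d, Im λ_d)`,
where the real numbers `Re λ_j`, `Im λ_j` are regarded as complex numbers. -/
def realImagEmb (d : ℕ) (l : Fin d → ℂ) : Fin (2 * d) → ℂ := fun j =>
  if j.val % 2 = 0 then ((l ⟨j.val / 2, by have := j.isLt; omega⟩).re : ℂ)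
  else ((l ⟨j.val / 2, by have := j.isLt; omega⟩).im : ℂ)

/-!
The map `J(w)_j = w_{2j} + i w_{2j+1}` is `ℂ`-linear, inverts `ι` on real points and sends
`D_{2d}(ι(λ⁰), r)` into `D_d(λ⁰, 2r)`, so `g = φ ∘ J` is holomorphic and bounded by `M` near
`ι(λ⁰)`. Since `w ↦ conj (g (conj w))` is holomorphic too, `ψ(w) = (g(w) + conj(g(conj w)))/2`
is holomorphic, bounded by `M`, and equals `Re g(w)` at real points `w = ι(λ)`.
-/

open Complex ComplexConjugate

def realPartExtension {E : Type*} [Star E] (g : E → ℂ) (w : E) : ℂ :=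
  (g w + conj (g (star w))) / 2

theorem norm_realPartExtension_le {E : Type*} [Star E] {g : E → ℂ} {w : E} {M : ℝ}
    (hw : ‖g w‖ ≤ M) (hsw : ‖g (star w)‖ ≤ M) : ‖realPartExtension g w‖ ≤ M := by
  have := norm_add_le (g w) (conj (g (star w)))
  rw [Complex.norm_conj] at this
  rw [realPartExtension, norm_div, RCLike.norm_two, div_le_iff₀ two_pos]
  linarith

theorem realPartExtension_apply_of_star_eq {E : Type*} [Star E] (g : E → ℂ) {w : E}
    (hw : star w = w) : realPartExtension g w = (g w).re := by
  rw [realPartExtension, hw, Complex.add_conj]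
  push_cast
  ring

theorem differentiableOn_realPartExtension {E : Type*} [NormedAddCommGroup E] [NormedSpace ℂ E]
    [StarAddMonoid E] [StarModule ℂ E] [ContinuousStar E] {g : E → ℂ} {U : Set E}
    (hg : DifferentiableOn ℂ g U) (hU : IsOpen U) :
    DifferentiableOn ℂ (realPartExtension g) (U ∩ star ⁻¹' U) := by
  rintro w ⟨hw, hsw⟩
  have hconj := (hg.differentiableAt (hU.mem_nhds hsw)).star_star
  rw [star_star] at hconj
  have hsum := ((hg.differentiableAt (hU.mem_nhds hw)).add hconj).mul_const (2⁻¹ : ℂ)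
  rw [show realPartExtension g = fun w => (g + star ∘ g ∘ star) w * 2⁻¹ from
    funext fun _ => div_eq_mul_inv _ _]
  exact hsum.differentiableWithinAt

theorem isOpen_polydisk (k : ℕ) (z : Fin k → ℂ) (r : ℝ) : IsOpen (polydisk k z r) := by
  simp only [polydisk, Set.ofPred_forall]
  exact isOpen_iInter_of_finite fun j => isOpen_lt (by fun_prop) continuous_const

theorem polydisk_mono {k : ℕ} (z : Fin k → ℂ) {r r' : ℝ} (h : r ≤ r') :
    polydisk k z r ⊆ polydisk k z r' :=
  fun _ hw j => (hw j).trans_le h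

theorem star_mem_polydisk {k : ℕ} {z w : Fin k → ℂ} {r : ℝ} (hz : star z = z)
    (hw : w ∈ polydisk k z r) : star w ∈ polydisk k z r := by
  intro j
  rw [← hz, ← Pi.sub_apply, ← star_sub, Pi.star_apply, norm_star]
  exact hw j

section RealImag

variable {d : ℕ}

def reIdx (j : Fin d) : Fin (2 * d) := ⟨2 * j, by omega⟩
def imIdx (j : Fin d) : Fin (2 * d) := ⟨2 * j + 1, by omega⟩

@[simp] theorem realImagEmb_reIdx (l : Fin d → ℂ) (j : Fin d) :
    realImagEmb d l (reIdx j) = (l j).re := by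
  simp [realImagEmb, reIdx]

@[simp] theorem realImagEmb_imIdx (l : Fin d → ℂ) (j : Fin d) :
    realImagEmb d l (imIdx j) = (l j).im := by
  have : (2 * j.1 + 1) / 2 = j.1 := by omega
  simp [realImagEmb, imIdx, this]

theorem star_realImagEmb (l : Fin d → ℂ) : star (realImagEmb d l) = realImagEmb d l := by
  funext j
  simp only [realImagEmb, Pi.star_apply]
  split_ifs <;> exact Complex.conj_ofReal _

variable (d) in
def realImagJoin : (Fin (2 * d) → ℂ) →L[ℂ] (Fin d → ℂ) :=
  ContinuousLinearMap.pi fun j =>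
    ContinuousLinearMap.proj (reIdx j) + I • ContinuousLinearMap.proj (imIdx j)

theorem realImagJoin_apply (w : Fin (2 * d) → ℂ) (j : Fin d) :
    realImagJoin d w j = w (reIdx j) + I * w (imIdx j) := rfl

theorem realImagJoin_realImagEmb (l : Fin d → ℂ) : realImagJoin d (realImagEmb d l) = l := by
  funext j
  rw [realImagJoin_apply, realImagEmb_reIdx, realImagEmb_imIdx, mul_comm, re_add_im]

theorem mapsTo_realImagJoin_polydisk (z : Fin (2 * d) → ℂ) (r : ℝ) :
    Set.MapsTo (realImagJoin d) (polydisk (2 * d) z r) (polydisk d (realImagJoin d z) (2 * r)) := by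
  intro w hw j
  calc ‖realImagJoin d w j - realImagJoin d z j‖
      = ‖(w (reIdx j) - z (reIdx j)) + I * (w (imIdx j) - z (imIdx j))‖ := by
        rw [realImagJoin_apply, realImagJoin_apply]; ring_nf
    _ ≤ ‖w (reIdx j) - z (reIdx j)‖ + ‖w (imIdx j) - z (imIdx j)‖ := by
        simpa using norm_add_le _ (I * (w (imIdx j) - z (imIdx j)))
    _ < 2 * r := by linarith [hw (reIdx j), hw (imIdx j)]

end RealImag

theorem stmt0 (d : ℕ) (M R : ℝ) (hM : 0 ≤ M) (hR : 0 < R)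
    (l0 : Fin d → ℂ) (φ : (Fin d → ℂ) → ℂ)
    (hφ : DifferentiableOn ℂ φ (polydisk d l0 R))
    (hbd : ∀ l ∈ polydisk d l0 R, ‖φ l‖ ≤ M) :
    ∃ ψ : (Fin (2 * d) → ℂ) → ℂ,
      DifferentiableOn ℂ ψ (polydisk (2 * d) (realImagEmb d l0) (R / 4)) ∧
      (∀ w ∈ polydisk (2 * d) (realImagEmb d l0) (R / 4),
        ‖ψ w‖ ≤ 4 ^ d * M) ∧
      (∀ l ∈ polydisk d l0 (R / 4), ψ (realImagEmb d l) = ((φ l).re : ℂ)) := by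
  set D := polydisk (2 * d) (realImagEmb d l0) (R / 4)
  set U := realImagJoin d ⁻¹' polydisk d l0 R
  have hDU : D ⊆ U := fun w hw => by
    have hJw := mapsTo_realImagJoin_polydisk _ _ hw
    rw [realImagJoin_realImagEmb] at hJw
    exact polydisk_mono l0 (by linarith) hJw
  have hstarD : ∀ w ∈ D, star w ∈ D := fun w => star_mem_polydisk (star_realImagEmb l0)
  refine ⟨realPartExtension (φ ∘ realImagJoin d), ?_, fun w hw => ?_, fun l _ => ?_⟩
  · have hU : DifferentiableOn ℂ (φ ∘ realImagJoin d) U :=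
      hφ.comp (realImagJoin d).differentiableOn (Set.mapsTo_preimage _ _)
    exact (differentiableOn_realPartExtension hU
      ((isOpen_polydisk d l0 R).preimage (realImagJoin d).continuous)).mono
      fun w hw => ⟨hDU hw, hDU (hstarD w hw)⟩
  · calc ‖realPartExtension (φ ∘ realImagJoin d) w‖ ≤ M :=
          norm_realPartExtension_le (hbd _ (hDU hw)) (hbd _ (hDU (hstarD w hw)))
      _ ≤ 4 ^ d * M := le_mul_of_one_le_left hM (one_le_pow₀ (by norm_num))
  · rw [realPartExtension_apply_of_star_eq _ (star_realImagEmb l), Function.comp_apply,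
      realImagJoin_realImagEmb]

end
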